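/- arXiv:1411.7770 — 2 statements merged into one kernel-verified Lean document; each statement's English description precedes it below -/
import Mathlib

section
/- Let k be a field and Q a finite quiver without oriented cycles. Let Aut(kQ/k^{Q₀}) denote the group of k^{Q₀}-algebra automorphisms of the path algebra kQ. The natural group homomorphism Aut(kQ/k^{Q₀}) → ∏_{i,j∈Q₀, i≠j} GL(V_{ij}^{prim}), induced by the action on the degree-one part modulo (kQ)_{≥2}, is surjective and split (a splitting is given by extending a tuple of linear automorphisms of the arrow spaces multiplicatively to an algebra automorphism of kQ); its kernel U, which equals the kernel of the action of Aut(kQ/k^{Q₀}) on (kQ)_{≥1}/(kQ)_{≥2}, is a normal subgroup, and the map U → ∏_{i,j∈Q₀, i≠j} Hom_k(V_{ij}^{prim}, V_{ij}^{nonprim}) sending g to the tuple of linear maps (a ↦ g(a) − a) on the arrow spaces is a bijection. In particular, Aut(kQ/k^{Q₀}) is isomorphic to the semidirect product (∏_{i≠j} GL(V_{ij}^{prim})) ⋉ U. -/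
/-- A finite quiver on a vertex set `V`: a family of finite types of arrows `Arrow i j`
from `i` to `j`. -/
structure FinQuiver (V : Type) where
  Arrow : V → V → Type
  [fintypeArrow : ∀ i j, Fintype (Arrow i j)]

attribute [instance] FinQuiver.fintypeArrow

/-- Paths in a finite quiver: `QPath Q i j` is the type of paths from `i` to `j`. -/
inductive QPath {V : Type} (Q : FinQuiver V) : V → V → Type
  | nil (i : V) : QPath Q i i
  | cons {i j l : V} (p : QPath Q i j) (a : Q.Arrow j l) : QPath Q i l

namespace QPath

variable {V : Type} {Q : FinQuiver V}

/-- The length (number of arrows) of a path. -/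
def length : ∀ {i j : V}, QPath Q i j → ℕ
  | _, _, nil _ => 0
  | _, _, cons p _ => length p + 1

/-- Concatenation of paths. -/
def comp : ∀ {i j l : V}, QPath Q i j → QPath Q j l → QPath Q i l
  | _, _, _, p, nil _ => p
  | _, _, _, p, cons q a => cons (comp p q) a

/-- Transport a path along equalities of its endpoints. -/
def cast {i j i' j' : V} (hi : i = i') (hj : j = j') (p : QPath Q i j) : QPath Q i' j' := by
  subst hi; subst hj; exact p

end QPath

/-- The quiver `Q` has no oriented cycles: every path from a vertex to itself has
length zero. -/
def FinQuiver.NoCycles {V : Type} (Q : FinQuiver V) : Prop :=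
  ∀ (i : V) (p : QPath Q i i), p.length = 0

/-- A realization of the `k`-algebra `A` as the path algebra of the quiver `Q`:
a `k`-basis indexed by the paths of `Q`, such that basis vectors multiply by
concatenation of composable paths (and give `0` for non-composable paths), and such
that the sum of the length-zero paths is `1`.  The basis vector of a path lying in
`e_i (kQ) e_j` is indexed by the corresponding path from `j` to `i`. -/
structure PathAlgStructure (k : Type) [CommRing k] {V : Type} [Fintype V] [DecidableEq V]
    (Q : FinQuiver V) (A : Type) [Ring A] [Algebra k A] where
  basis : Module.Basis (Σ i : V, Σ j : V, QPath Q i j) k A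
  basis_mul : ∀ {a b c d : V} (p : QPath Q a b) (q : QPath Q c d),
    basis ⟨c, d, q⟩ * basis ⟨a, b, p⟩ =
      if h : b = c then basis ⟨a, d, p.comp (q.cast h.symm rfl)⟩ else 0
  one_def : (1 : A) = ∑ i : V, basis ⟨i, i, QPath.nil i⟩

namespace PathAlgStructure

variable {k : Type} [CommRing k] {V : Type} [Fintype V] [DecidableEq V]
  {Q : FinQuiver V} {A : Type} [Ring A] [Algebra k A]

/-- The idempotent `e_i` of the path algebra: the length-zero path at the vertex `i`. -/
noncomputable def idem (ps : PathAlgStructure k Q A) (i : V) : A :=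
  ps.basis ⟨i, i, QPath.nil i⟩

/-- `(kQ)_{≥ n}`: the span of the paths of length at least `n`. -/
def degreeGE (ps : PathAlgStructure k Q A) (n : ℕ) : Submodule k A :=
  Submodule.span k {x | ∃ (i j : V) (p : QPath Q i j), n ≤ p.length ∧ x = ps.basis ⟨i, j, p⟩}

/-- `e_i (kQ) e_j`: the span of the paths from `j` to `i`. -/
def pathSpan (ps : PathAlgStructure k Q A) (i j : V) : Submodule k A :=
  Submodule.span k {x | ∃ p : QPath Q j i, x = ps.basis ⟨j, i, p⟩}

/-- `V_{ij}^{prim}`: the span of the arrows from `j` to `i`. -/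
def arrowSpan (ps : PathAlgStructure k Q A) (i j : V) : Submodule k A :=
  Submodule.span k {x | ∃ a : Q.Arrow j i, x = ps.basis ⟨j, i, (QPath.nil j).cons a⟩}

/-- `V_{ij}^{nonprim} = e_i (kQ)_{≥2} e_j`: the span of the paths from `j` to `i`
of length at least two. -/
def nonprimSpan (ps : PathAlgStructure k Q A) (i j : V) : Submodule k A :=
  Submodule.span k {x | ∃ p : QPath Q j i, 2 ≤ p.length ∧ x = ps.basis ⟨j, i, p⟩}

end PathAlgStructure

variable {k : Type} [Field k] {V : Type} [Fintype V] [DecidableEq V]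
  {Q : FinQuiver V} {A : Type} [Ring A] [Algebra k A]

/-- `Aut(kQ/k^{Q₀})`: the group of `k^{Q₀}`-algebra automorphisms of the path algebra,
i.e. the `k`-algebra automorphisms fixing every idempotent `e_i`. -/
def idemFixing (ps : PathAlgStructure k Q A) : Subgroup (A ≃ₐ[k] A) where
  carrier := {g | ∀ i : V, g (ps.idem i) = ps.idem i}
  one_mem' := fun _ => rfl
  mul_mem' := fun {g h} hg hh i => by
    simp only [Set.mem_setOf_eq] at hg hh
    simp only [AlgEquiv.mul_apply, hh i, hg i]
  inv_mem' := fun {g} hg i => by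
    simp only [Set.mem_setOf_eq] at hg
    show g.symm (ps.idem i) = ps.idem i
    exact g.symm_apply_eq.mpr (hg i).symm

/-- The product group `∏_{i ≠ j} GL(V_{ij}^{prim})`. -/
abbrev glProd (ps : PathAlgStructure k Q A) : Type :=
  ∀ q : {q : V × V // q.1 ≠ q.2}, LinearMap.GeneralLinearGroup k ↥(ps.arrowSpan q.1.1 q.1.2)

/-!
An automorphism fixing the idempotents preserves every `e_i (kQ) e_j` and, as `Q` has no
oriented cycles, every `(kQ)_{≥ n}`; hence it acts on
`V_{ij}^{prim} ≅ e_i ((kQ)_{≥1} / (kQ)_{≥2}) e_j`, which defines `π`. As an algebra over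
`k^{Q₀}`, `kQ` is free on the arrows: any choice of images `x_a ∈ e_i (kQ) e_j` of the arrows
`a : j ⟶ i` extends uniquely to an algebra endomorphism. Taking `x_a = T a` gives the splitting
`σ`. Taking `x_a = a + φ a` with `φ a` of degree `≥ 2` gives an endomorphism `F` with
`(F - 1) (kQ)_{≥ n} ⊆ (kQ)_{≥ n+1}`; since paths have length `< |Q₀|`, `F - 1` is nilpotent, so
`F` is an automorphism, and it lies in the kernel of `π`. A split surjection of groups exhibits
its source as a semidirect product of the kernel and the target.
-/

namespace QPath

variable {V : Type} {Q : FinQuiver V}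

@[simp] lemma comp_nil {i j : V} (p : QPath Q i j) : p.comp (nil j) = p := by
  rw [comp]

@[simp] lemma comp_cons {i j l m : V} (p : QPath Q i j) (q : QPath Q j l) (a : Q.Arrow l m) :
    p.comp (q.cons a) = (p.comp q).cons a := by
  rw [comp]

@[simp] lemma length_nil {i : V} : (nil (Q := Q) i).length = 0 := by
  rw [length]

@[simp] lemma length_cons {i j l : V} (p : QPath Q i j) (a : Q.Arrow j l) :
    (p.cons a).length = p.length + 1 := by
  rw [length]

@[simp] lemma nil_comp {i j : V} (p : QPath Q i j) : (nil i).comp p = p := by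
  induction p with
  | nil => exact comp_nil _
  | cons p a ih => rw [comp_cons, ih]

lemma length_comp {i j l : V} (p : QPath Q i j) (q : QPath Q j l) :
    (p.comp q).length = p.length + q.length := by
  induction q with
  | nil => rw [comp_nil, length_nil, Nat.add_zero]
  | cons q a ih => rw [comp_cons, length_cons, ih, length_cons, Nat.add_assoc]

lemma eq_of_length_eq_zero {i j : V} (p : QPath Q i j) (h : p.length = 0) : i = j := by
  cases p with
  | nil => rfl
  | cons p a => simp at h

lemma one_le_length_of_ne {i j : V} (p : QPath Q i j) (h : i ≠ j) : 1 ≤ p.length :=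
  Nat.one_le_iff_ne_zero.2 fun h0 => h (p.eq_of_length_eq_zero h0)

lemma exists_eq_arrow_of_length_eq_one {i j : V} (p : QPath Q i j) (h : p.length = 1) :
    ∃ a : Q.Arrow i j, p = (nil i).cons a := by
  cases p with
  | nil => simp at h
  | cons p a =>
    cases p with
    | nil => exact ⟨a, rfl⟩
    | cons p b => simp at h

def support : ∀ {i j : V}, QPath Q i j → List V
  | _, j, nil _ => [j]
  | _, j, cons p _ => j :: p.support

lemma length_support {i j : V} (p : QPath Q i j) : p.support.length = p.length + 1 := by
  induction p with
  | nil => simp [support]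
  | cons p a ih => simp [support, ih]

lemma nonempty_of_mem_support {i j v : V} (p : QPath Q i j) (hv : v ∈ p.support) :
    Nonempty (QPath Q v j) := by
  induction p with
  | nil => rw [support, List.mem_singleton] at hv; exact ⟨hv ▸ nil v⟩
  | cons p a ih =>
    rw [support] at hv
    rcases List.mem_cons.1 hv with rfl | h
    · exact ⟨nil _⟩
    · exact ⟨(ih h).some.cons a⟩

lemma support_nodup (hQ : Q.NoCycles) {i j : V} (p : QPath Q i j) : p.support.Nodup := by
  induction p with
  | nil => simp [support]
  | cons p a ih =>
    rw [support]
    refine List.nodup_cons.2 ⟨fun hl => ?_, ih⟩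
    obtain ⟨q⟩ := nonempty_of_mem_support p hl
    simpa using hQ _ (q.cons a)

lemma length_lt_card [Fintype V] (hQ : Q.NoCycles) {i j : V} (p : QPath Q i j) :
    p.length < Fintype.card V := by
  have := (support_nodup hQ p).length_le_card
  rw [length_support] at this
  omega

end QPath

lemma FinQuiver.NoCycles.ne_of_arrow {V : Type} {Q : FinQuiver V} (hQ : Q.NoCycles) {i j : V}
    (a : Q.Arrow j i) : i ≠ j := by
  rintro rfl
  simpa using hQ _ ((QPath.nil _).cons a)

lemma MonoidHom.exists_mulEquiv_semidirectProduct_ker {G H : Type*} [Group G] [Group H]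
    (π : G →* H) (σ : H →* G) (hσ : π.comp σ = MonoidHom.id H) :
    ∃ act : H →* MulAut π.ker, Nonempty (G ≃* π.ker ⋊[act] H) := by
  have hright : Function.RightInverse σ π := DFunLike.congr_fun hσ
  let S : GroupExtension π.ker G H :=
    { inl := π.ker.subtype
      rightHom := π
      inl_injective := Subtype.val_injective
      range_inl_eq_ker_rightHom := π.ker.range_subtype
      rightHom_surjective := hright.surjective }
  let s : S.Splitting := ⟨σ, hright⟩
  exact ⟨s.conjAct, ⟨s.semidirectProductMulEquiv.symm⟩⟩

namespace PathAlgStructure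

section CommRing

variable {R : Type} [CommRing R] [Algebra R A] (ps : PathAlgStructure R Q A)

lemma basis_mul_basis {a b d : V} (p : QPath Q a b) (q : QPath Q b d) :
    ps.basis ⟨b, d, q⟩ * ps.basis ⟨a, b, p⟩ = ps.basis ⟨a, d, p.comp q⟩ := by
  rw [ps.basis_mul, dif_pos rfl]
  rfl

lemma basis_mul_basis_of_ne {a b c d : V} (h : b ≠ c) (p : QPath Q a b) (q : QPath Q c d) :
    ps.basis ⟨c, d, q⟩ * ps.basis ⟨a, b, p⟩ = 0 := by
  rw [ps.basis_mul, dif_neg h]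

lemma basis_cons {i j l : V} (p : QPath Q i j) (a : Q.Arrow j l) :
    ps.basis ⟨i, l, p.cons a⟩ = ps.basis ⟨j, l, (QPath.nil j).cons a⟩ * ps.basis ⟨i, j, p⟩ := by
  rw [basis_mul_basis, QPath.comp_cons, QPath.comp_nil]

lemma idem_mul_basis {i j : V} (p : QPath Q i j) :
    ps.idem j * ps.basis ⟨i, j, p⟩ = ps.basis ⟨i, j, p⟩ := by
  rw [idem, basis_mul_basis, QPath.comp_nil]

lemma idem_mul_basis_of_ne {i j l : V} (h : j ≠ l) (p : QPath Q i j) :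
    ps.idem l * ps.basis ⟨i, j, p⟩ = 0 :=
  ps.basis_mul_basis_of_ne h _ _

lemma basis_mul_idem {i j : V} (p : QPath Q i j) :
    ps.basis ⟨i, j, p⟩ * ps.idem i = ps.basis ⟨i, j, p⟩ := by
  rw [idem, basis_mul_basis, QPath.nil_comp]

lemma basis_mul_idem_of_ne {i j l : V} (h : l ≠ i) (p : QPath Q i j) :
    ps.basis ⟨i, j, p⟩ * ps.idem l = 0 :=
  ps.basis_mul_basis_of_ne h _ _

lemma idem_mul_idem (i : V) : ps.idem i * ps.idem i = ps.idem i :=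
  ps.idem_mul_basis _

lemma idem_mul_idem_of_ne {i j : V} (h : i ≠ j) : ps.idem j * ps.idem i = 0 :=
  ps.idem_mul_basis_of_ne h _

lemma degreeGE_le_comap {M : Type} [AddCommGroup M] [Module R M] {f : A →ₗ[R] M}
    {P : Submodule R M} {n : ℕ}
    (h : ∀ (i j : V) (p : QPath Q i j), n ≤ p.length → f (ps.basis ⟨i, j, p⟩) ∈ P) :
    ps.degreeGE n ≤ P.comap f :=
  Submodule.span_le.2 <| by rintro _ ⟨i, j, p, hp, rfl⟩; exact h i j p hp

lemma basis_mem_degreeGE {n : ℕ} {i j : V} (p : QPath Q i j) (h : n ≤ p.length) :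
    ps.basis ⟨i, j, p⟩ ∈ ps.degreeGE n :=
  Submodule.subset_span ⟨i, j, p, h, rfl⟩

lemma basis_mem_pathSpan {i j : V} (p : QPath Q j i) : ps.basis ⟨j, i, p⟩ ∈ ps.pathSpan i j :=
  Submodule.subset_span ⟨p, rfl⟩

lemma arrow_mem_arrowSpan {i j : V} (a : Q.Arrow j i) :
    ps.basis ⟨j, i, (QPath.nil j).cons a⟩ ∈ ps.arrowSpan i j :=
  Submodule.subset_span ⟨a, rfl⟩

lemma mem_degreeGE_zero (x : A) : x ∈ ps.degreeGE 0 :=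
  Submodule.span_le.2
    (by rintro _ ⟨⟨i, j, p⟩, rfl⟩; exact ps.basis_mem_degreeGE p (Nat.zero_le _))
    (ps.basis.mem_span x)

lemma degreeGE_antitone {m n : ℕ} (h : m ≤ n) : ps.degreeGE n ≤ ps.degreeGE m :=
  Submodule.span_mono <| by rintro _ ⟨i, j, p, hp, rfl⟩; exact ⟨i, j, p, h.trans hp, rfl⟩

lemma degreeGE_eq_bot (hQ : Q.NoCycles) : ps.degreeGE (Fintype.card V) = ⊥ :=
  Submodule.span_eq_bot.2 <| by
    rintro _ ⟨i, j, p, hp, -⟩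
    exact absurd hp (Nat.not_le.2 (QPath.length_lt_card hQ p))

lemma mul_mem_degreeGE {x y : A} {m n : ℕ} (hx : x ∈ ps.degreeGE m) (hy : y ∈ ps.degreeGE n) :
    x * y ∈ ps.degreeGE (m + n) := by
  have hle : ps.degreeGE m * ps.degreeGE n ≤ ps.degreeGE (m + n) := by
    rw [degreeGE, degreeGE, Submodule.span_mul_span]
    refine Submodule.span_le.2 ?_
    rintro _ ⟨_, ⟨c, d, q, hq, rfl⟩, _, ⟨a, b, p, hp, rfl⟩, rfl⟩
    change ps.basis _ * ps.basis _ ∈ _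
    rw [ps.basis_mul]
    split_ifs with h
    · subst h
      refine ps.basis_mem_degreeGE _ ?_
      rw [QPath.length_comp]
      exact Nat.add_comm m n ▸ Nat.add_le_add hp hq
    · exact Submodule.zero_mem _
  exact hle (Submodule.mul_mem_mul hx hy)

lemma arrowSpan_le_pathSpan (i j : V) : ps.arrowSpan i j ≤ ps.pathSpan i j :=
  Submodule.span_mono <| by rintro _ ⟨a, rfl⟩; exact ⟨_, rfl⟩

lemma nonprimSpan_le_pathSpan (i j : V) : ps.nonprimSpan i j ≤ ps.pathSpan i j :=
  Submodule.span_mono <| by rintro _ ⟨p, -, rfl⟩; exact ⟨p, rfl⟩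

lemma nonprimSpan_le_degreeGE_two (i j : V) : ps.nonprimSpan i j ≤ ps.degreeGE 2 :=
  Submodule.span_mono <| by rintro _ ⟨p, hp, rfl⟩; exact ⟨j, i, p, hp, rfl⟩

lemma arrowSpan_le_degreeGE_one (i j : V) : ps.arrowSpan i j ≤ ps.degreeGE 1 :=
  Submodule.span_mono <| by rintro _ ⟨a, rfl⟩; exact ⟨j, i, _, by simp, rfl⟩

lemma pathSpan_le_degreeGE_one {i j : V} (h : i ≠ j) : ps.pathSpan i j ≤ ps.degreeGE 1 :=
  Submodule.span_mono <| by
    rintro _ ⟨p, rfl⟩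
    exact ⟨j, i, p, p.one_le_length_of_ne h.symm, rfl⟩

lemma idem_mul_basis_mul_idem_mem {P : Submodule R A} {a b : V} (i j : V) (p : QPath Q a b)
    (h : b = i → a = j → ps.basis ⟨a, b, p⟩ ∈ P) :
    ps.idem i * ps.basis ⟨a, b, p⟩ * ps.idem j ∈ P := by
  by_cases hb : b = i
  · subst hb
    rw [idem_mul_basis]
    by_cases ha : a = j
    · subst ha
      rw [basis_mul_idem]
      exact h rfl rfl
    · rw [basis_mul_idem_of_ne _ (Ne.symm ha)]
      exact P.zero_mem
  · rw [idem_mul_basis_of_ne _ hb, zero_mul]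
    exact P.zero_mem

lemma idem_mul_mul_idem_mem_pathSpan (i j : V) (y : A) :
    ps.idem i * y * ps.idem j ∈ ps.pathSpan i j := by
  refine (Submodule.span_le (p := (ps.pathSpan i j).comap
    (LinearMap.mulLeftRight R (ps.idem i, ps.idem j)))).2 ?_ (ps.basis.mem_span y)
  rintro _ ⟨⟨a, b, p⟩, rfl⟩
  refine ps.idem_mul_basis_mul_idem_mem (P := ps.pathSpan i j) i j p fun hb ha => ?_
  subst hb ha
  exact ps.basis_mem_pathSpan p

lemma idem_mul_mul_idem_mem_nonprimSpan (i j : V) {x : A} (hx : x ∈ ps.degreeGE 2) :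
    ps.idem i * x * ps.idem j ∈ ps.nonprimSpan i j := by
  refine ps.degreeGE_le_comap (P := ps.nonprimSpan i j)
    (f := LinearMap.mulLeftRight R (ps.idem i, ps.idem j)) (fun _ _ p hp => ?_) hx
  refine ps.idem_mul_basis_mul_idem_mem i j p fun hb ha => ?_
  subst hb ha
  exact Submodule.subset_span ⟨p, hp, rfl⟩

lemma idem_mul_mul_idem_of_mem_pathSpan {i j : V} {x : A} (hx : x ∈ ps.pathSpan i j) :
    ps.idem i * x * ps.idem j = x := by
  refine (Submodule.span_le (p := LinearMap.eqLocus
    (LinearMap.mulLeftRight R (ps.idem i, ps.idem j)) LinearMap.id)).2 ?_ hx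
  rintro _ ⟨p, rfl⟩
  exact (congrArg (· * _) (ps.idem_mul_basis p)).trans (ps.basis_mul_idem p)

lemma mem_nonprimSpan_of_mem_pathSpan {i j : V} {x : A} (hpath : x ∈ ps.pathSpan i j)
    (hdeg : x ∈ ps.degreeGE 2) : x ∈ ps.nonprimSpan i j :=
  ps.idem_mul_mul_idem_of_mem_pathSpan hpath ▸ ps.idem_mul_mul_idem_mem_nonprimSpan i j hdeg

section Lift

variable (f : ∀ i j : V, Q.Arrow j i → A)

noncomputable def pathProd : ∀ {i j : V}, QPath Q i j → A
  | i, _, QPath.nil _ => ps.idem i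
  | _, _, QPath.cons p a => f _ _ a * pathProd p

@[simp] lemma pathProd_nil (i : V) : ps.pathProd f (QPath.nil i) = ps.idem i := by
  rw [pathProd]

@[simp] lemma pathProd_cons {i j l : V} (p : QPath Q i j) (a : Q.Arrow j l) :
    ps.pathProd f (p.cons a) = f l j a * ps.pathProd f p := by
  rw [pathProd]

lemma pathProd_mul_idem {i j : V} (p : QPath Q i j) :
    ps.pathProd f p * ps.idem i = ps.pathProd f p := by
  induction p with
  | nil => rw [pathProd_nil, idem_mul_idem]
  | cons p a ih => rw [pathProd_cons, mul_assoc, ih]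

variable {f} (hf : ∀ (i j : V) (a : Q.Arrow j i), ps.idem i * f i j a * ps.idem j = f i j a)
include hf

lemma idem_mul_pathProd {i j : V} (p : QPath Q i j) :
    ps.idem j * ps.pathProd f p = ps.pathProd f p := by
  cases p with
  | nil => rw [pathProd_nil, idem_mul_idem]
  | cons p a =>
    rw [pathProd_cons, ← mul_assoc]
    nth_rw 1 [← hf]
    rw [← mul_assoc, ← mul_assoc, idem_mul_idem, hf]

lemma pathProd_comp {i j l : V} (p : QPath Q i j) (q : QPath Q j l) :
    ps.pathProd f (p.comp q) = ps.pathProd f q * ps.pathProd f p := by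
  induction q with
  | nil => rw [QPath.comp_nil, pathProd_nil, ps.idem_mul_pathProd hf]
  | cons q a ih => rw [QPath.comp_cons, pathProd_cons, pathProd_cons, ih, mul_assoc]

/-- The universal property of the path algebra: an algebra endomorphism is freely determined
by images `f i j a ∈ e_i A e_j` of the arrows `a : j ⟶ i`. -/
noncomputable def lift : A →ₐ[R] A := by
  refine AlgHom.ofLinearMap (ps.basis.constr R fun s => ps.pathProd f s.2.2) ?_ ?_
  · rw [ps.one_def, map_sum]
    exact Finset.sum_congr rfl fun i _ => by rw [Module.Basis.constr_basis, pathProd_nil]; rfl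
  · intro x y
    set F := ps.basis.constr R fun s : Σ i : V, Σ j : V, QPath Q i j => ps.pathProd f s.2.2
    have hbasis : ∀ s t : Σ i : V, Σ j : V, QPath Q i j,
        F (ps.basis s * ps.basis t) = F (ps.basis s) * F (ps.basis t) := by
      rintro ⟨c, d, q⟩ ⟨a, b, p⟩
      simp only [F, ps.basis_mul, Module.Basis.constr_basis]
      split_ifs with h
      · subst h
        rw [Module.Basis.constr_basis]
        exact ps.pathProd_comp hf p q
      · rw [map_zero, ← ps.pathProd_mul_idem f q, ← ps.idem_mul_pathProd hf p, mul_assoc,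
          ← mul_assoc (ps.idem c), idem_mul_idem_of_ne _ h, zero_mul, mul_zero]
    have := LinearMap.ext_basis (B := (LinearMap.mul R A : A →ₗ[R] A →ₗ[R] A).compr₂ F)
      (B' := (LinearMap.mul R A : A →ₗ[R] A →ₗ[R] A).compl₁₂ F F) ps.basis ps.basis hbasis
    exact LinearMap.congr_fun₂ this x y

lemma lift_basis {i j : V} (p : QPath Q i j) :
    ps.lift hf (ps.basis ⟨i, j, p⟩) = ps.pathProd f p :=
  ps.basis.constr_basis R _ _

lemma lift_idem (i : V) : ps.lift hf (ps.idem i) = ps.idem i :=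
  (ps.lift_basis hf (QPath.nil i)).trans (ps.pathProd_nil f i)

lemma lift_arrow {i j : V} (a : Q.Arrow j i) :
    ps.lift hf (ps.basis ⟨j, i, (QPath.nil j).cons a⟩) = f i j a := by
  rw [lift_basis, pathProd_cons, pathProd_nil]
  nth_rw 1 [← hf]
  rw [mul_assoc, idem_mul_idem, hf]

end Lift

lemma algHom_ext (hQ : Q.NoCycles) {F G : A →ₐ[R] A}
    (h0 : ∀ i : V, F (ps.idem i) = G (ps.idem i))
    (h1 : ∀ (q : {q : V × V // q.1 ≠ q.2}) (v : ps.arrowSpan q.1.1 q.1.2), F v = G v) :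
    F = G := by
  refine AlgHom.toLinearMap_injective (ps.basis.ext fun ⟨i, j, p⟩ => ?_)
  induction p with
  | nil => exact h0 _
  | cons p a ih =>
    change F _ = G _
    rw [ps.basis_cons p a, map_mul, map_mul,
      h1 ⟨(_, _), hQ.ne_of_arrow a⟩ ⟨_, ps.arrow_mem_arrowSpan a⟩]
    exact congrArg _ ih

lemma arrowSpan_linearMap_ext {M : Type} [AddCommGroup M] [Module R M] {i j : V}
    {f g : ps.arrowSpan i j →ₗ[R] M}
    (h : ∀ a : Q.Arrow j i, f ⟨_, ps.arrow_mem_arrowSpan a⟩ = g ⟨_, ps.arrow_mem_arrowSpan a⟩) :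
    f = g := by
  refine LinearMap.ext_on Submodule.span_span_coe_preimage fun v hv => ?_
  obtain ⟨a, ha⟩ := hv
  obtain rfl : v = ⟨_, ps.arrow_mem_arrowSpan a⟩ := Subtype.ext ha
  exact h a

section LiftOfArrowSpan

variable (hQ : Q.NoCycles) (L : ∀ q : {q : V × V // q.1 ≠ q.2},
  ps.arrowSpan q.1.1 q.1.2 →ₗ[R] ps.pathSpan q.1.1 q.1.2)

noncomputable def liftOfArrowSpan : A →ₐ[R] A :=
  ps.lift (f := fun i j a => L ⟨(i, j), hQ.ne_of_arrow a⟩ ⟨_, ps.arrow_mem_arrowSpan a⟩)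
    fun _ _ _ => ps.idem_mul_mul_idem_of_mem_pathSpan (Subtype.property _)

lemma liftOfArrowSpan_idem (i : V) : ps.liftOfArrowSpan hQ L (ps.idem i) = ps.idem i :=
  ps.lift_idem _ i

lemma liftOfArrowSpan_apply (q : {q : V × V // q.1 ≠ q.2}) (v : ps.arrowSpan q.1.1 q.1.2) :
    ps.liftOfArrowSpan hQ L v = L q v := by
  obtain ⟨⟨i, j⟩, hij⟩ := q
  have : (ps.liftOfArrowSpan hQ L).toLinearMap ∘ₗ (ps.arrowSpan i j).subtype =
      (ps.pathSpan i j).subtype ∘ₗ L ⟨(i, j), hij⟩ :=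
    ps.arrowSpan_linearMap_ext fun a =>
      ps.lift_arrow (fun _ _ _ => ps.idem_mul_mul_idem_of_mem_pathSpan (Subtype.property _)) a
  exact LinearMap.congr_fun this v

end LiftOfArrowSpan

noncomputable def arrowProj : A →ₗ[R] A :=
  ps.basis.constr R fun s => if s.2.2.length = 1 then ps.basis s else 0

lemma arrowProj_basis {i j : V} (p : QPath Q i j) :
    ps.arrowProj (ps.basis ⟨i, j, p⟩) = if p.length = 1 then ps.basis ⟨i, j, p⟩ else 0 :=
  ps.basis.constr_basis R _ _

lemma arrowProj_of_mem_arrowSpan {i j : V} {x : A} (hx : x ∈ ps.arrowSpan i j) :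
    ps.arrowProj x = x := by
  refine (Submodule.span_le (p := LinearMap.eqLocus ps.arrowProj LinearMap.id)).2 ?_ hx
  rintro _ ⟨a, rfl⟩
  change ps.arrowProj _ = _
  rw [arrowProj_basis, if_pos (by simp)]
  rfl

lemma arrowProj_of_mem_degreeGE_two {x : A} (hx : x ∈ ps.degreeGE 2) : ps.arrowProj x = 0 :=
  ps.degreeGE_le_comap (P := ⊥) (fun _ _ p hp => by
    rw [Submodule.mem_bot, arrowProj_basis, if_neg (by omega)]) hx

lemma arrowProj_mem_arrowSpan {i j : V} {x : A} (hx : x ∈ ps.pathSpan i j) :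
    ps.arrowProj x ∈ ps.arrowSpan i j := by
  refine (Submodule.span_le (p := (ps.arrowSpan i j).comap ps.arrowProj)).2 ?_ hx
  rintro _ ⟨p, rfl⟩
  change ps.arrowProj _ ∈ ps.arrowSpan i j
  rw [arrowProj_basis]
  split_ifs with h
  · obtain ⟨a, rfl⟩ := p.exists_eq_arrow_of_length_eq_one h
    exact ps.arrow_mem_arrowSpan a
  · exact Submodule.zero_mem _

lemma sub_arrowProj_mem_degreeGE_two {x : A} (hx : x ∈ ps.degreeGE 1) :
    x - ps.arrowProj x ∈ ps.degreeGE 2 := by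
  refine ps.degreeGE_le_comap (P := ps.degreeGE 2) (f := LinearMap.id - ps.arrowProj)
    (fun _ _ p hp => ?_) hx
  change ps.basis _ - ps.arrowProj _ ∈ _
  rw [arrowProj_basis]
  split_ifs with h
  · rw [sub_self]
    exact Submodule.zero_mem _
  · rw [sub_zero]
    exact ps.basis_mem_degreeGE p (by omega)

lemma arrowProj_eq_iff {i j : V} {v y : A} (hv : v ∈ ps.arrowSpan i j)
    (hy : y ∈ ps.degreeGE 1) : ps.arrowProj y = v ↔ y - v ∈ ps.degreeGE 2 := by
  constructor
  · rintro rfl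
    exact ps.sub_arrowProj_mem_degreeGE_two hy
  · intro h
    rw [← sub_eq_zero, ← ps.arrowProj_of_mem_arrowSpan hv, ← map_sub,
      ps.arrowProj_of_mem_degreeGE_two h]

section Automorphism

variable {F : A →ₐ[R] A} (hF : ∀ i : V, F (ps.idem i) = ps.idem i)
include hF

lemma map_mem_pathSpan {i j : V} {x : A} (hx : x ∈ ps.pathSpan i j) :
    F x ∈ ps.pathSpan i j := by
  rw [← ps.idem_mul_mul_idem_of_mem_pathSpan hx, map_mul, map_mul, hF, hF]
  exact ps.idem_mul_mul_idem_mem_pathSpan i j _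

lemma map_basis_mem_degreeGE (hQ : Q.NoCycles) {i j : V} (p : QPath Q i j) :
    F (ps.basis ⟨i, j, p⟩) ∈ ps.degreeGE p.length := by
  induction p with
  | nil => exact QPath.length_nil (Q := Q) ▸ ps.mem_degreeGE_zero _
  | @cons m l p a ih =>
    rw [ps.basis_cons, map_mul, QPath.length_cons, Nat.add_comm]
    refine ps.mul_mem_degreeGE (ps.pathSpan_le_degreeGE_one (hQ.ne_of_arrow a) ?_) ih
    exact ps.map_mem_pathSpan hF (ps.basis_mem_pathSpan _)

lemma map_mem_degreeGE (hQ : Q.NoCycles) {n : ℕ} {x : A} (hx : x ∈ ps.degreeGE n) :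
    F x ∈ ps.degreeGE n :=
  ps.degreeGE_le_comap (f := F.toLinearMap) (fun _ _ p hp =>
    ps.degreeGE_antitone hp (ps.map_basis_mem_degreeGE hF hQ p)) hx

lemma arrowProj_map_arrowProj (hQ : Q.NoCycles) {x : A} (hx : x ∈ ps.degreeGE 1) :
    ps.arrowProj (F (ps.arrowProj x)) = ps.arrowProj (F x) := by
  rw [← sub_eq_zero, ← map_sub, ← map_sub, ← neg_sub, map_neg, map_neg, neg_eq_zero,
    ps.arrowProj_of_mem_degreeGE_two
      (ps.map_mem_degreeGE hF hQ (ps.sub_arrowProj_mem_degreeGE_two hx))]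

lemma sub_mem_degreeGE_succ
    (h1 : ∀ (i j : V) (a : Q.Arrow j i), F (ps.basis ⟨j, i, (QPath.nil j).cons a⟩) -
      ps.basis ⟨j, i, (QPath.nil j).cons a⟩ ∈ ps.degreeGE 2)
    {n : ℕ} {x : A} (hx : x ∈ ps.degreeGE n) : F x - x ∈ ps.degreeGE (n + 1) := by
  have hbasis : ∀ {i j : V} (p : QPath Q i j),
      F (ps.basis ⟨i, j, p⟩) - ps.basis ⟨i, j, p⟩ ∈ ps.degreeGE (p.length + 1) := by
    intro i j p
    induction p with
    | nil => rw [← idem, hF, sub_self]; exact Submodule.zero_mem _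
    | @cons m l p a ih =>
      set b := ps.basis ⟨m, l, (QPath.nil m).cons a⟩
      set c := ps.basis ⟨i, m, p⟩
      have hFc : F c ∈ ps.degreeGE p.length :=
        sub_add_cancel (F c) c ▸ Submodule.add_mem _ (ps.degreeGE_antitone (by omega) ih)
          (ps.basis_mem_degreeGE p le_rfl)
      have hb : b ∈ ps.degreeGE 1 := ps.basis_mem_degreeGE _ (by simp)
      rw [ps.basis_cons, map_mul, QPath.length_cons,
        show F b * F c - b * c = (F b - b) * F c + b * (F c - c) by noncomm_ring]
      exact Submodule.add_mem _
        (ps.degreeGE_antitone (by omega) (ps.mul_mem_degreeGE (h1 _ _ a) hFc))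
        (ps.degreeGE_antitone (by omega) (ps.mul_mem_degreeGE hb ih))
  exact ps.degreeGE_le_comap (f := F.toLinearMap - LinearMap.id) (fun _ _ p hp =>
    ps.degreeGE_antitone (Nat.succ_le_succ hp) (hbasis p)) hx

end Automorphism

/-- `F - 1` is nilpotent because `(kQ)_{≥ |Q₀|} = 0`. -/
lemma bijective_of_sub_mem_degreeGE_succ (hQ : Q.NoCycles) {F : A →ₗ[R] A}
    (hF : ∀ (n : ℕ) (x : A), x ∈ ps.degreeGE n → F x - x ∈ ps.degreeGE (n + 1)) :
    Function.Bijective F := by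
  have hpow : ∀ (n : ℕ) (x : A), ((F - 1) ^ n) x ∈ ps.degreeGE n := by
    intro n
    induction n with
    | zero => exact fun x => ps.mem_degreeGE_zero _
    | succ n ih => exact fun x => by rw [pow_succ', Module.End.mul_apply]; exact hF n _ (ih x)
  have hnil : IsNilpotent (F - 1) := ⟨Fintype.card V, LinearMap.ext fun x => by
    simpa [ps.degreeGE_eq_bot hQ] using hpow (Fintype.card V) x⟩
  simpa using (Module.End.isUnit_iff _).1 hnil.isUnit_one_add

end CommRing

section Field

variable (ps : PathAlgStructure k Q A) (hQ : Q.NoCycles)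

/-- The action of `g` on `V_{ij}^{prim} ≅ e_i ((kQ)_{≥1} / (kQ)_{≥2}) e_j`. -/
noncomputable def arrowEnd (q : {q : V × V // q.1 ≠ q.2}) :
    idemFixing ps →* Module.End k (ps.arrowSpan q.1.1 q.1.2) where
  toFun g := (ps.arrowProj ∘ₗ (g : A ≃ₐ[k] A).toLinearMap).restrict fun _ hx =>
    ps.arrowProj_mem_arrowSpan
      (ps.map_mem_pathSpan (F := (g : A ≃ₐ[k] A).toAlgHom) g.2 (ps.arrowSpan_le_pathSpan _ _ hx))
  map_one' := LinearMap.ext fun v => Subtype.ext (ps.arrowProj_of_mem_arrowSpan v.2)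
  map_mul' g h := LinearMap.ext fun v => Subtype.ext
    (ps.arrowProj_map_arrowProj (F := (g : A ≃ₐ[k] A).toAlgHom) g.2 hQ
      (ps.map_mem_degreeGE (F := (h : A ≃ₐ[k] A).toAlgHom) h.2 hQ
        (ps.arrowSpan_le_degreeGE_one _ _ v.2))).symm

noncomputable def toArrowGL : idemFixing ps →* glProd ps :=
  MonoidHom.pi fun q => (ps.arrowEnd hQ q).toHomUnits

lemma toArrowGL_apply (g : idemFixing ps) (q : {q : V × V // q.1 ≠ q.2})
    (v : ps.arrowSpan q.1.1 q.1.2) :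
    ((ps.toArrowGL hQ g q : Module.End k (ps.arrowSpan q.1.1 q.1.2)) v : A) =
      ps.arrowProj ((g : A ≃ₐ[k] A) v) :=
  rfl

lemma sub_toArrowGL_mem_degreeGE_two (g : idemFixing ps) (q : {q : V × V // q.1 ≠ q.2})
    (v : ps.arrowSpan q.1.1 q.1.2) :
    (g : A ≃ₐ[k] A) v - ((ps.toArrowGL hQ g q : Module.End k (ps.arrowSpan q.1.1 q.1.2)) v : A) ∈
      ps.degreeGE 2 :=
  ps.sub_arrowProj_mem_degreeGE_two (ps.map_mem_degreeGE (F := (g : A ≃ₐ[k] A).toAlgHom) g.2 hQ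
    (ps.arrowSpan_le_degreeGE_one _ _ v.2))

lemma mem_ker_toArrowGL_iff_arrowSpan (g : idemFixing ps) :
    g ∈ (ps.toArrowGL hQ).ker ↔ ∀ (q : {q : V × V // q.1 ≠ q.2}) (v : ps.arrowSpan q.1.1 q.1.2),
      (g : A ≃ₐ[k] A) v - v ∈ ps.degreeGE 2 := by
  simp only [MonoidHom.mem_ker, funext_iff, Units.ext_iff, LinearMap.ext_iff, Subtype.ext_iff]
  refine forall₂_congr fun q v => ?_
  exact ps.arrowProj_eq_iff v.2 (ps.map_mem_degreeGE (F := (g : A ≃ₐ[k] A).toAlgHom) g.2 hQ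
    (ps.arrowSpan_le_degreeGE_one _ _ v.2))

lemma mem_ker_toArrowGL_iff (g : idemFixing ps) :
    g ∈ (ps.toArrowGL hQ).ker ↔ ∀ x ∈ ps.degreeGE 1, (g : A ≃ₐ[k] A) x - x ∈ ps.degreeGE 2 := by
  rw [mem_ker_toArrowGL_iff_arrowSpan]
  refine ⟨fun h x hx => ?_, fun h q v => h v (ps.arrowSpan_le_degreeGE_one _ _ v.2)⟩
  exact ps.sub_mem_degreeGE_succ (F := (g : A ≃ₐ[k] A).toAlgHom) g.2
    (fun i j a => h ⟨(i, j), hQ.ne_of_arrow a⟩ ⟨_, ps.arrow_mem_arrowSpan a⟩) hx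

lemma sub_mem_nonprimSpan_of_mem_ker {g : idemFixing ps} (hg : g ∈ (ps.toArrowGL hQ).ker)
    (q : {q : V × V // q.1 ≠ q.2}) (v : ps.arrowSpan q.1.1 q.1.2) :
    (g : A ≃ₐ[k] A) v - v ∈ ps.nonprimSpan q.1.1 q.1.2 :=
  ps.mem_nonprimSpan_of_mem_pathSpan
    (Submodule.sub_mem _ (ps.map_mem_pathSpan (F := (g : A ≃ₐ[k] A).toAlgHom) g.2
      (ps.arrowSpan_le_pathSpan _ _ v.2)) (ps.arrowSpan_le_pathSpan _ _ v.2))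
    ((ps.mem_ker_toArrowGL_iff_arrowSpan hQ g).1 hg q v)

include hQ in
lemma idemFixing_ext {g g' : idemFixing ps}
    (h : ∀ (q : {q : V × V // q.1 ≠ q.2}) (v : ps.arrowSpan q.1.1 q.1.2),
      (g : A ≃ₐ[k] A) v = (g' : A ≃ₐ[k] A) v) : g = g' :=
  Subtype.ext <| AlgEquiv.coe_algHom_injective <|
    ps.algHom_ext hQ (fun i => (g.2 i).trans (g'.2 i).symm) h

noncomputable def liftOfGL (T : glProd ps) : A →ₐ[k] A :=
  ps.liftOfArrowSpan hQ fun q =>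
    Submodule.inclusion (ps.arrowSpan_le_pathSpan _ _) ∘ₗ (T q : Module.End k _)

lemma liftOfGL_idem (T : glProd ps) (i : V) : ps.liftOfGL hQ T (ps.idem i) = ps.idem i :=
  ps.liftOfArrowSpan_idem hQ _ i

lemma liftOfGL_apply (T : glProd ps) (q : {q : V × V // q.1 ≠ q.2})
    (v : ps.arrowSpan q.1.1 q.1.2) :
    ps.liftOfGL hQ T v = ((T q : Module.End k (ps.arrowSpan q.1.1 q.1.2)) v : A) :=
  ps.liftOfArrowSpan_apply hQ _ q v

noncomputable def liftOfGLHom : glProd ps →* (A →ₐ[k] A) where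
  toFun := ps.liftOfGL hQ
  map_one' := ps.algHom_ext hQ (fun i => ps.liftOfGL_idem hQ 1 i) fun q v =>
    ps.liftOfGL_apply hQ 1 q v
  map_mul' T T' := ps.algHom_ext hQ
    (fun i => by rw [AlgHom.mul_apply, liftOfGL_idem, liftOfGL_idem, liftOfGL_idem])
    fun q v => by
      rw [AlgHom.mul_apply, liftOfGL_apply, liftOfGL_apply, liftOfGL_apply]
      rfl

noncomputable def ofArrowGL : glProd ps →* idemFixing ps :=
  ((AlgEquiv.algHomUnitsEquiv k A).toMonoidHom.comp (ps.liftOfGLHom hQ).toHomUnits).codRestrict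
    _ fun T i => ps.liftOfGL_idem hQ T i

lemma ofArrowGL_apply (T : glProd ps) (q : {q : V × V // q.1 ≠ q.2})
    (v : ps.arrowSpan q.1.1 q.1.2) :
    (ps.ofArrowGL hQ T : A ≃ₐ[k] A) v = ((T q : Module.End k (ps.arrowSpan q.1.1 q.1.2)) v : A) :=
  ps.liftOfGL_apply hQ T q v

lemma toArrowGL_comp_ofArrowGL :
    (ps.toArrowGL hQ).comp (ps.ofArrowGL hQ) = MonoidHom.id (glProd ps) := by
  ext T q v
  rw [MonoidHom.comp_apply, toArrowGL_apply, ofArrowGL_apply]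
  exact ps.arrowProj_of_mem_arrowSpan (Subtype.property _)

section Unipotent

variable (φ : ∀ q : {q : V × V // q.1 ≠ q.2},
  ps.arrowSpan q.1.1 q.1.2 →ₗ[k] ps.nonprimSpan q.1.1 q.1.2)

noncomputable def liftOfNonprim : A →ₐ[k] A :=
  ps.liftOfArrowSpan hQ fun q => Submodule.inclusion (ps.arrowSpan_le_pathSpan _ _) +
    Submodule.inclusion (ps.nonprimSpan_le_pathSpan _ _) ∘ₗ φ q

lemma liftOfNonprim_idem (i : V) : ps.liftOfNonprim hQ φ (ps.idem i) = ps.idem i :=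
  ps.liftOfArrowSpan_idem hQ _ i

lemma liftOfNonprim_sub (q : {q : V × V // q.1 ≠ q.2}) (v : ps.arrowSpan q.1.1 q.1.2) :
    ps.liftOfNonprim hQ φ v - v = φ q v := by
  rw [liftOfNonprim, liftOfArrowSpan_apply]
  exact add_sub_cancel_left _ _

lemma liftOfNonprim_bijective : Function.Bijective (ps.liftOfNonprim hQ φ) :=
  ps.bijective_of_sub_mem_degreeGE_succ hQ (F := (ps.liftOfNonprim hQ φ).toLinearMap)
    fun _ _ => ps.sub_mem_degreeGE_succ (F := ps.liftOfNonprim hQ φ) (ps.liftOfNonprim_idem hQ φ)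
      fun i j a => by
        rw [ps.liftOfNonprim_sub hQ φ ⟨(i, j), hQ.ne_of_arrow a⟩ ⟨_, ps.arrow_mem_arrowSpan a⟩]
        exact ps.nonprimSpan_le_degreeGE_two _ _ (Subtype.property _)

noncomputable def ofNonprim : idemFixing ps :=
  ⟨AlgEquiv.ofBijective _ (ps.liftOfNonprim_bijective hQ φ), ps.liftOfNonprim_idem hQ φ⟩

lemma ofNonprim_sub (q : {q : V × V // q.1 ≠ q.2}) (v : ps.arrowSpan q.1.1 q.1.2) :
    (ps.ofNonprim hQ φ : A ≃ₐ[k] A) v - v = φ q v :=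
  ps.liftOfNonprim_sub hQ φ q v

lemma ofNonprim_mem_ker : ps.ofNonprim hQ φ ∈ (ps.toArrowGL hQ).ker :=
  (ps.mem_ker_toArrowGL_iff_arrowSpan hQ _).2 fun q v => by
    rw [ofNonprim_sub]
    exact ps.nonprimSpan_le_degreeGE_two _ _ (Subtype.property _)

end Unipotent

end Field

end PathAlgStructure

/-- For a finite quiver `Q` without oriented cycles, the structure of the automorphism
group `Aut(kQ/k^{Q₀})`: the natural homomorphism `π` to `∏_{i≠j} GL(V_{ij}^{prim})`
(induced by the action on the degree-one part modulo `(kQ)_{≥2}`) is surjective and split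
(by multiplicative extension), its kernel `U` is the (normal) subgroup of automorphisms
acting trivially on `(kQ)_{≥1}/(kQ)_{≥2}`, and `g ↦ (a ↦ g(a) − a)` is a bijection from
`U` onto `∏_{i≠j} Hom_k(V_{ij}^{prim}, V_{ij}^{nonprim})`.  In particular
`Aut(kQ/k^{Q₀}) ≅ (∏_{i≠j} GL(V_{ij}^{prim})) ⋉ U`. -/
theorem automorphism_group_of_path_algebra
    (ps : PathAlgStructure k Q A) (hQ : Q.NoCycles) :
    ∃ π : ↥(idemFixing ps) →* glProd ps,
      -- `π` is the natural map induced by the action on arrows modulo `(kQ)_{≥2}`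
      (∀ (g : ↥(idemFixing ps)) (q : {q : V × V // q.1 ≠ q.2})
          (v : ↥(ps.arrowSpan q.1.1 q.1.2)),
        ((g : A ≃ₐ[k] A) (v : A)) -
            ((((π g q : ↥(ps.arrowSpan q.1.1 q.1.2) →ₗ[k] ↥(ps.arrowSpan q.1.1 q.1.2))) v : A))
          ∈ ps.degreeGE 2) ∧
      -- `π` is surjective
      Function.Surjective ⇑π ∧
      -- `π` is split, by extending a tuple of linear automorphisms multiplicatively
      (∃ σ : glProd ps →* ↥(idemFixing ps),
        π.comp σ = MonoidHom.id (glProd ps) ∧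
        ∀ (T : glProd ps) (q : {q : V × V // q.1 ≠ q.2})
            (v : ↥(ps.arrowSpan q.1.1 q.1.2)),
          ((σ T : A ≃ₐ[k] A)) (v : A) =
            (((T q : ↥(ps.arrowSpan q.1.1 q.1.2) →ₗ[k] ↥(ps.arrowSpan q.1.1 q.1.2))) v : A)) ∧
      -- the kernel of `π` is the kernel of the action on `(kQ)_{≥1}/(kQ)_{≥2}` …
      (∀ g : ↥(idemFixing ps),
        g ∈ π.ker ↔ ∀ x ∈ ps.degreeGE 1, ((g : A ≃ₐ[k] A) x) - x ∈ ps.degreeGE 2) ∧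
      -- … and it is a normal subgroup
      π.ker.Normal ∧
      -- elements of the kernel move an arrow by an element of `V_{ij}^{nonprim}` …
      (∀ g ∈ π.ker, ∀ (q : {q : V × V // q.1 ≠ q.2}) (v : ↥(ps.arrowSpan q.1.1 q.1.2)),
        ((g : A ≃ₐ[k] A) (v : A)) - (v : A) ∈ ps.nonprimSpan q.1.1 q.1.2) ∧
      -- … and `g ↦ (a ↦ g(a) − a)` is a bijection from the kernel onto
      --   `∏_{i≠j} Hom_k(V_{ij}^{prim}, V_{ij}^{nonprim})`
      (∀ φ : ∀ q : {q : V × V // q.1 ≠ q.2},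
          (↥(ps.arrowSpan q.1.1 q.1.2) →ₗ[k] ↥(ps.nonprimSpan q.1.1 q.1.2)),
        ∃! g : ↥(idemFixing ps), g ∈ π.ker ∧
          ∀ (q : {q : V × V // q.1 ≠ q.2}) (v : ↥(ps.arrowSpan q.1.1 q.1.2)),
            ((g : A ≃ₐ[k] A) (v : A)) - (v : A) = ((φ q v : ↥(ps.nonprimSpan q.1.1 q.1.2)) : A)) ∧
      -- in particular, `Aut(kQ/k^{Q₀})` is the semidirect product `(∏ GL(V_{ij}^{prim})) ⋉ U`
      (∃ act : glProd ps →* MulAut ↥π.ker,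
        Nonempty (↥(idemFixing ps) ≃* (↥π.ker ⋊[act] glProd ps))) := by
  have hsplit := ps.toArrowGL_comp_ofArrowGL hQ
  refine ⟨ps.toArrowGL hQ, ps.sub_toArrowGL_mem_degreeGE_two hQ,
    fun T => ⟨_, DFunLike.congr_fun hsplit T⟩,
    ⟨ps.ofArrowGL hQ, hsplit, ps.ofArrowGL_apply hQ⟩, ps.mem_ker_toArrowGL_iff hQ, inferInstance,
    fun _ hg => ps.sub_mem_nonprimSpan_of_mem_ker hQ hg, fun φ => ?_,
    MonoidHom.exists_mulEquiv_semidirectProduct_ker _ _ hsplit⟩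
  refine ⟨ps.ofNonprim hQ φ, ⟨ps.ofNonprim_mem_ker hQ φ, ps.ofNonprim_sub hQ φ⟩,
    fun g ⟨_, hg⟩ => ps.idemFixing_ext hQ fun q v => ?_⟩
  exact sub_left_inj.1 ((hg q v).trans (ps.ofNonprim_sub hQ φ q v).symm)
end

section
/- Let k be an algebraically closed field of characteristic different from 3, and let (t₀, t₁) ∈ k² with (t₀, t₁) ≠ (0, 0). Consider the cubic form F = t₀(x³ + y³ + z³) + t₁xyz ∈ k[x, y, z] of the Hesse pencil. Then there exists a point (x, y, z) ≠ (0, 0, 0) at which all three partial derivatives ∂F/∂x, ∂F/∂y, ∂F/∂z vanish (equivalently, since char k ≠ 3 and F is homogeneous, the plane projective cubic curve F = 0 has a singular point) if and only if t₀(t₁³ + 27t₀³) = 0, i.e., if and only if (t₀ : t₁) is one of the four points (0 : 1), (1 : −3), (1 : −3ω), (1 : −3ω²), where ω ∈ k is a primitive third root of unity. In other words, the member of the Hesse pencil with parameter (t₀ : t₁) is a smooth plane cubic exactly for (t₀ : t₁) outside these four values, where it degenerates to a singular cubic (a triangle of three lines, respectively the triangle xyz = 0). -/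
/-!
At a common zero `(x, y, z)` of the partials we have `t₁yz = -3t₀x²`, `t₁zx = -3t₀y²` and
`t₁xy = -3t₀z²`; multiplying gives `(t₁³ + 27t₀³)(xyz)² = 0`. When `t₀ ≠ 0` a vanishing
coordinate forces the other two to vanish, so `xyz ≠ 0` and `t₁³ + 27t₀³ = 0`.
Conversely `(1 : 0 : 0)` is singular for `t₀ = 0`, and `(1 : ω : ω)` for `t₁ = -3ωt₀`, `ω³ = 1`.
-/

open MvPolynomial

/-- The member of the Hesse pencil with parameter `(t₀, t₁)`:
the cubic form `t₀ (x³ + y³ + z³) + t₁ xyz`. -/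
noncomputable def hesseForm (k : Type) [CommRing k] (t₀ t₁ : k) : MvPolynomial (Fin 3) k :=
  C t₀ * (X 0 ^ 3 + X 1 ^ 3 + X 2 ^ 3) + C t₁ * (X 0 * X 1 * X 2)

section

variable {k : Type} [CommRing k] {t₀ t₁ : k} {p : Fin 3 → k}

theorem eval_pderiv_hesseForm (t₀ t₁ : k) (p : Fin 3 → k) (i : Fin 3) :
    eval p (pderiv i (hesseForm k t₀ t₁)) = 3 * t₀ * p i ^ 2 + t₁ * p (i + 1) * p (i + 2) := by
  fin_cases i <;> simp [hesseForm, pderiv_X] <;> ring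

theorem hesse_discr_mul_sq_eq_zero
    (h : ∀ i : Fin 3, 3 * t₀ * p i ^ 2 + t₁ * p (i + 1) * p (i + 2) = 0) :
    (t₁ ^ 3 + 27 * t₀ ^ 3) * (p 0 * p 1 * p 2) ^ 2 = 0 := by
  have h₀ : 3 * t₀ * p 0 ^ 2 + t₁ * p 1 * p 2 = 0 := h 0
  have h₁ : 3 * t₀ * p 1 ^ 2 + t₁ * p 2 * p 0 = 0 := h 1
  have h₂ : 3 * t₀ * p 2 ^ 2 + t₁ * p 0 * p 1 = 0 := h 2
  linear_combination (t₁ * p 2 * p 0) * (t₁ * p 0 * p 1) * h₀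
    - 3 * t₀ * p 0 ^ 2 * (t₁ * p 0 * p 1) * h₁ + 9 * t₀ ^ 2 * p 0 ^ 2 * p 1 ^ 2 * h₂

theorem hesse_eq_zero_of_apply_eq_zero [NoZeroDivisors k] (h3t₀ : 3 * t₀ ≠ 0)
    (h : ∀ i : Fin 3, 3 * t₀ * p i ^ 2 + t₁ * p (i + 1) * p (i + 2) = 0)
    {i : Fin 3} (hi : p i = 0) : p = 0 := by
  funext j
  rcases eq_or_ne i j with rfl | hij
  · exact hi
  have hprod : p (j + 1) * p (j + 2) = 0 := by
    rcases (by omega : i = j + 1 ∨ i = j + 2) with rfl | rfl <;> simp [hi]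
  have hsq : 3 * t₀ * p j ^ 2 = 0 := by linear_combination h j - t₁ * hprod
  exact pow_eq_zero_iff two_ne_zero |>.mp ((mul_eq_zero.mp hsq).resolve_left h3t₀)

theorem hesse_discr_eq_zero_of_pderiv_eq_zero [NoZeroDivisors k] (h3 : (3 : k) ≠ 0) (hp : p ≠ 0)
    (h : ∀ i : Fin 3, eval p (pderiv i (hesseForm k t₀ t₁)) = 0) :
    t₀ * (t₁ ^ 3 + 27 * t₀ ^ 3) = 0 := by
  simp only [eval_pderiv_hesseForm] at h
  rcases eq_or_ne t₀ 0 with ht₀ | ht₀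
  · simp [ht₀]
  have hcoord (i : Fin 3) : p i ≠ 0 := fun hi =>
    hp (hesse_eq_zero_of_apply_eq_zero (mul_ne_zero h3 ht₀) h hi)
  have hxyz : (p 0 * p 1 * p 2) ^ 2 ≠ 0 := by simp [hcoord]
  simp [(mul_eq_zero.mp (hesse_discr_mul_sq_eq_zero h)).resolve_right hxyz]

theorem eval_pderiv_hesseForm_zero_left (t₁ : k) (i : Fin 3) :
    eval ![1, 0, 0] (pderiv i (hesseForm k 0 t₁)) = 0 := by
  rw [eval_pderiv_hesseForm]
  fin_cases i <;> simp

theorem eval_pderiv_hesseForm_of_pow_three_eq_one {ω : k} (hω : ω ^ 3 = 1)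
    (t₀ : k) (i : Fin 3) :
    eval ![1, ω, ω] (pderiv i (hesseForm k t₀ (-(3 * ω * t₀)))) = 0 := by
  rw [eval_pderiv_hesseForm]
  fin_cases i <;> simp
  · linear_combination -3 * t₀ * hω
  all_goals ring

end

theorem hesse_discr_eq_zero_iff {k : Type} [Field k] (h3 : (3 : k) ≠ 0) (t₀ t₁ : k) :
    t₀ * (t₁ ^ 3 + 27 * t₀ ^ 3) = 0 ↔ t₀ = 0 ∨ ∃ ω : k, ω ^ 3 = 1 ∧ t₁ = -(3 * ω * t₀) := by
  refine ⟨fun h => ?_, ?_⟩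
  · rcases eq_or_ne t₀ 0 with ht₀ | ht₀
    · exact .inl ht₀
    have hcube := (mul_eq_zero.mp h).resolve_left ht₀
    refine .inr ⟨-t₁ / (3 * t₀), ?_, by field_simp⟩
    field_simp
    linear_combination -hcube
  · rintro (rfl | ⟨ω, hω, rfl⟩)
    · ring
    · linear_combination (-27 * t₀ ^ 4) * hω

theorem hesse_pencil_singular_iff_general (k : Type) [Field k]
    (hchar : (3 : k) ≠ 0) (t₀ t₁ : k) :
    ((∃ p : Fin 3 → k, p ≠ 0 ∧
        ∀ i : Fin 3, MvPolynomial.eval p (MvPolynomial.pderiv i (hesseForm k t₀ t₁)) = 0) ↔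
      t₀ * (t₁ ^ 3 + 27 * t₀ ^ 3) = 0) ∧
    (t₀ * (t₁ ^ 3 + 27 * t₀ ^ 3) = 0 ↔
      (t₀ = 0 ∨ ∃ ω : k, ω ^ 3 = 1 ∧ t₁ = -(3 * ω * t₀))) := by
  have hdiscr := hesse_discr_eq_zero_iff hchar t₀ t₁
  refine ⟨⟨fun ⟨p, hp, h⟩ => hesse_discr_eq_zero_of_pderiv_eq_zero hchar hp h, fun h => ?_⟩,
    hdiscr⟩
  have hne {b c : k} : ![(1 : k), b, c] ≠ 0 := fun h => one_ne_zero (congrFun h 0)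
  rcases hdiscr.mp h with rfl | ⟨ω, hω, rfl⟩
  · exact ⟨_, hne, eval_pderiv_hesseForm_zero_left t₁⟩
  · exact ⟨_, hne, eval_pderiv_hesseForm_of_pow_three_eq_one hω t₀⟩

/-- Over an algebraically closed field of characteristic different from 3, the member of
the Hesse pencil with parameter `(t₀ : t₁)` has a singular point (i.e. the three partial
derivatives of `F = t₀(x³+y³+z³) + t₁xyz` have a common nontrivial zero) if and only if
`t₀ (t₁³ + 27 t₀³) = 0`, i.e. iff `(t₀ : t₁)` is one of the four points
`(0 : 1)`, `(1 : −3)`, `(1 : −3ω)`, `(1 : −3ω²)` with `ω³ = 1`. -/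
theorem hesse_pencil_singular_iff (k : Type) [Field k] [IsAlgClosed k]
    (hchar : (3 : k) ≠ 0) (t₀ t₁ : k) (ht : (t₀, t₁) ≠ (0, 0)) :
    ((∃ p : Fin 3 → k, p ≠ 0 ∧
        ∀ i : Fin 3, MvPolynomial.eval p (MvPolynomial.pderiv i (hesseForm k t₀ t₁)) = 0) ↔
      t₀ * (t₁ ^ 3 + 27 * t₀ ^ 3) = 0) ∧
    (t₀ * (t₁ ^ 3 + 27 * t₀ ^ 3) = 0 ↔
      (t₀ = 0 ∨ ∃ ω : k, ω ^ 3 = 1 ∧ t₁ = -(3 * ω * t₀))) :=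
  hesse_pencil_singular_iff_general k hchar t₀ t₁
end
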